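/- In the nerve of the tetradic interpretation of the C major scale, the 1-skeleton is the complete graph K₇ (any two distinct tetradic degrees intersect), and the sets S_i = {i, i+1, i+3, i+5} of degree indices mod 7 (i = 0,…,6) are exactly the index-sets of four degrees with common nonempty intersection; in particular there are exactly seven 3-simplices and no 4-simplex. -/
import Mathlib


def scaleTone : Fin 7 → ZMod 12 := ![0, 2, 4, 5, 7, 9, 11]

/-- The `i`-th tetradic degree (seventh chord) of the C major scale. -/
def tetrad (i : Fin 7) : Finset (ZMod 12) :=
  {scaleTone i, scaleTone (i + 2), scaleTone (i + 4), scaleTone (i + 6)}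

/-- In the nerve of the tetradic interpretation: the 1-skeleton is K₇, the
3-simplices are exactly the index sets {i, i+1, i+3, i+5}, there are exactly
seven of them, and there is no 4-simplex. -/
theorem tetradic_nerve :
    (∀ i j : Fin 7, i ≠ j → (tetrad i ∩ tetrad j).Nonempty) ∧
    (∀ S : Finset (Fin 7), S.card = 4 →
      ((∃ t : ZMod 12, ∀ i ∈ S, t ∈ tetrad i) ↔
        ∃ i : Fin 7, S = {i, i + 1, i + 3, i + 5})) ∧
    ((Finset.univ.filter (fun S : Finset (Fin 7) =>
        S.card = 4 ∧ ∃ t : ZMod 12, ∀ i ∈ S, t ∈ tetrad i)).card = 7) ∧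
    (∀ S : Finset (Fin 7), S.card = 5 → ¬ ∃ t : ZMod 12, ∀ i ∈ S, t ∈ tetrad i) := by
  set_option maxRecDepth 10000 in
  decide
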